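/- arXiv:2302.06935 — 3 statements merged into one kernel-verified Lean document; each statement's English description precedes it below -/
import Mathlib

section
/- For every real γ, the product Φ(γ)(1-Φ(γ)) satisfies [Φ(γ)(1-Φ(γ))]^{-1} ≤ 4·exp(2γ²/π); equivalently, Φ(γ)(1-Φ(γ)) ≥ (1/4)·exp(-2γ²/π). -/
/-!
Pólya's argument. Since `Φ(-γ) = 1 - Φ(γ)`, we have `4 Φ(γ)(1 - Φ(γ)) = 1 - (Φ(γ) - Φ(-γ))²`, and
`2π (Φ(γ) - Φ(-γ))²` is the integral of `exp (-(x² + y²) / 2)` over the square `[-γ, γ]²`.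
The disc of the same area has radius `R` with `π R² = 4γ²`, and since the integrand is radially
decreasing, moving mass from the square to that disc can only increase the integral. In polar
coordinates the disc integral is `2π (1 - exp (-R² / 2)) = 2π (1 - exp (-2γ² / π))`.
-/

open MeasureTheory Real Filter Set

noncomputable def Phi (x : ℝ) : ℝ :=
  (Real.sqrt (2 * Real.pi))⁻¹ * ∫ t in Set.Iic x, Real.exp (-t ^ 2 / 2)

open scoped ENNReal

section Rearrangement

variable {α : Type*} [MeasurableSpace α] {μ : Measure α} {f : α → ℝ} {s t : Set α} {c : ℝ}

theorem setIntegral_le_setIntegral_of_measure_eq (hs : MeasurableSet s) (ht : MeasurableSet t)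
    (hst : μ s = μ t) (hs_fin : μ s ≠ ∞) (hfs : IntegrableOn f s μ) (hft : IntegrableOn f t μ)
    (hle : ∀ x ∈ s \ t, f x ≤ c) (hge : ∀ x ∈ t \ s, c ≤ f x) :
    ∫ x in s, f x ∂μ ≤ ∫ x in t, f x ∂μ := by
  have h_sdiff : μ (s \ t) = μ (t \ s) :=
    measure_sdiff_symm hs.nullMeasurableSet ht.nullMeasurableSet hst
      (measure_ne_top_of_subset inter_subset_left hs_fin)
  have h_sdiff_fin : μ (s \ t) ≠ ∞ := measure_ne_top_of_subset sdiff_subset hs_fin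
  have h_int_sdiff : ∫ x in s \ t, f x ∂μ ≤ ∫ x in t \ s, f x ∂μ :=
    calc ∫ x in s \ t, f x ∂μ ≤ ∫ _ in s \ t, c ∂μ :=
          setIntegral_mono_on (hfs.mono_set sdiff_subset) (integrableOn_const h_sdiff_fin)
            (hs.diff ht) hle
      _ = c * μ.real (t \ s) := by rw [setIntegral_const, smul_eq_mul, mul_comm, Measure.real,
            h_sdiff, Measure.real]
      _ ≤ ∫ x in t \ s, f x ∂μ :=
          setIntegral_ge_of_const_le_real (ht.diff hs) (h_sdiff ▸ h_sdiff_fin) hge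
            (hft.mono_set sdiff_subset)
  rw [← integral_inter_add_sdiff ht hfs, ← integral_inter_add_sdiff hs hft, inter_comm]
  gcongr

end Rearrangement

lemma exp_neg_sq_div_two_eq (t : ℝ) : exp (-t ^ 2 / 2) = exp (-(1 / 2) * t ^ 2) := by
  ring_nf

lemma integrable_exp_neg_sq_div_two : Integrable fun t : ℝ ↦ exp (-t ^ 2 / 2) := by
  simpa only [exp_neg_sq_div_two_eq] using integrable_exp_neg_mul_sq (by norm_num : (0 : ℝ) < 1 / 2)

lemma integral_exp_neg_sq_div_two : ∫ t, exp (-t ^ 2 / 2) = √(2 * π) := by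
  simp only [exp_neg_sq_div_two_eq, integral_gaussian]
  congr 1
  field_simp

lemma exp_neg_normSq_div_two (p : ℝ × ℝ) :
    exp (-(p.1 ^ 2 + p.2 ^ 2) / 2) = exp (-p.1 ^ 2 / 2) * exp (-p.2 ^ 2 / 2) := by
  rw [← exp_add]; ring_nf

lemma integrable_exp_neg_normSq_div_two :
    Integrable fun p : ℝ × ℝ ↦ exp (-(p.1 ^ 2 + p.2 ^ 2) / 2) := by
  simp only [exp_neg_normSq_div_two, Measure.volume_eq_prod]
  exact integrable_exp_neg_sq_div_two.mul_prod integrable_exp_neg_sq_div_two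

lemma setIntegral_exp_neg_normSq_div_two_square (a : ℝ) :
    ∫ p in Icc (-a) a ×ˢ Icc (-a) a, exp (-(p.1 ^ 2 + p.2 ^ 2) / 2)
      = (∫ t in Icc (-a) a, exp (-t ^ 2 / 2)) ^ 2 := by
  simp only [exp_neg_normSq_div_two, Measure.volume_eq_prod]
  rw [setIntegral_prod_mul (fun t ↦ exp (-t ^ 2 / 2)) (fun t ↦ exp (-t ^ 2 / 2)), sq]

/-- `ℝ × ℝ` carries the sup norm, so its `Metric.closedBall` is a square, not this disc. -/
def closedDisc (R : ℝ) : Set (ℝ × ℝ) := {p | p.1 ^ 2 + p.2 ^ 2 ≤ R ^ 2}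

lemma measurableSet_closedDisc (R : ℝ) : MeasurableSet (closedDisc R) :=
  measurableSet_le (by fun_prop) (by fun_prop)

lemma preimage_closedDisc {R : ℝ} (hR : 0 ≤ R) :
    Complex.measurableEquivRealProd ⁻¹' closedDisc R = Metric.closedBall (0 : ℂ) R := by
  ext z
  rw [mem_closedBall_zero_iff, Complex.norm_eq_sqrt_sq_add_sq, sqrt_le_left hR]
  rfl

lemma volume_closedDisc {R : ℝ} (hR : 0 ≤ R) :
    volume (closedDisc R) = ENNReal.ofReal (π * R ^ 2) := by
  rw [← Complex.volume_preserving_equiv_real_prod.measure_preimage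
    (measurableSet_closedDisc R).nullMeasurableSet, preimage_closedDisc hR,
    Complex.volume_closedBall, ← ENNReal.ofReal_pow hR, ← NNReal.coe_real_pi,
    ← ENNReal.ofReal_coe_nnreal, ← ENNReal.ofReal_mul (sq_nonneg R), mul_comm, NNReal.coe_real_pi]

lemma polarCoord_symm_sq_add_sq (p : ℝ × ℝ) :
    (polarCoord.symm p).1 ^ 2 + (polarCoord.symm p).2 ^ 2 = p.1 ^ 2 := by
  simp only [polarCoord_symm_apply]
  linear_combination p.1 ^ 2 * cos_sq_add_sin_sq p.2

theorem integral_comp_sq_add_sq (f : ℝ → ℝ) :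
    ∫ p : ℝ × ℝ, f (p.1 ^ 2 + p.2 ^ 2) = 2 * π * ∫ ρ in Ioi 0, ρ * f (ρ ^ 2) := by
  rw [← integral_comp_polarCoord_symm, polarCoord_target]
  have h_integrand (p : ℝ × ℝ) :
      p.1 • f ((polarCoord.symm p).1 ^ 2 + (polarCoord.symm p).2 ^ 2) = p.1 * f (p.1 ^ 2) * 1 := by
    rw [polarCoord_symm_sq_add_sq, smul_eq_mul, mul_one]
  simp only [h_integrand, Measure.volume_eq_prod]
  rw [setIntegral_prod_mul (fun ρ ↦ ρ * f (ρ ^ 2)) (fun _ ↦ (1 : ℝ)), setIntegral_const,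
    volume_real_Ioo_of_le (by linarith [pi_pos]), smul_eq_mul]
  ring

lemma integral_mul_exp_neg_sq_div_two_Ioc {R : ℝ} (hR : 0 ≤ R) :
    ∫ ρ in Ioc 0 R, ρ * exp (-ρ ^ 2 / 2) = 1 - exp (-R ^ 2 / 2) := by
  have h_deriv (ρ : ℝ) : HasDerivAt (fun ρ ↦ -exp (-ρ ^ 2 / 2)) (ρ * exp (-ρ ^ 2 / 2)) ρ := by
    have h_exponent : HasDerivAt (fun ρ : ℝ ↦ -ρ ^ 2 / 2) (-ρ) ρ :=
      ((hasDerivAt_pow 2 ρ).neg.div_const 2).congr_deriv (by norm_num; ring)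
    exact h_exponent.exp.neg.congr_deriv (by ring)
  rw [← intervalIntegral.integral_of_le hR,
    intervalIntegral.integral_eq_sub_of_hasDerivAt (fun ρ _ ↦ h_deriv ρ)
      (Continuous.intervalIntegrable (by fun_prop) _ _)]
  norm_num
  ring

lemma setIntegral_exp_neg_normSq_div_two_closedDisc {R : ℝ} (hR : 0 ≤ R) :
    ∫ p in closedDisc R, exp (-(p.1 ^ 2 + p.2 ^ 2) / 2) = 2 * π * (1 - exp (-R ^ 2 / 2)) := by
  have h_disc : (closedDisc R).indicator (fun p ↦ exp (-(p.1 ^ 2 + p.2 ^ 2) / 2))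
      = fun p ↦ (Iic (R ^ 2)).indicator (fun u ↦ exp (-u / 2)) (p.1 ^ 2 + p.2 ^ 2) := rfl
  have h_radial : EqOn (fun ρ ↦ ρ * (Iic (R ^ 2)).indicator (fun u ↦ exp (-u / 2)) (ρ ^ 2))
      ((Iic R).indicator fun ρ ↦ ρ * exp (-ρ ^ 2 / 2)) (Ioi 0) := by
    intro ρ hρ
    simp only [indicator, mem_Iic, sq_le_sq₀ (le_of_lt hρ) hR]
    split_ifs <;> simp
  rw [← integral_indicator (measurableSet_closedDisc R), h_disc, integral_comp_sq_add_sq,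
    setIntegral_congr_fun measurableSet_Ioi h_radial, setIntegral_indicator measurableSet_Iic,
    Ioi_inter_Iic, integral_mul_exp_neg_sq_div_two_Ioc hR]

theorem sq_intervalIntegral_exp_neg_sq_div_two_le (a : ℝ) :
    (∫ t in (-a)..a, exp (-t ^ 2 / 2)) ^ 2 ≤ 2 * π * (1 - exp (-(2 * a ^ 2) / π)) := by
  wlog ha : 0 ≤ a generalizing a
  · simpa [intervalIntegral.integral_symm a (-a)] using this (-a) (by linarith)
  set R := 2 * a / √π
  have hR : 0 ≤ R := by positivity
  have hR_sq : R ^ 2 = 4 * a ^ 2 / π := by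
    rw [div_pow, sq_sqrt pi_pos.le]; ring
  have h_volume : volume (Icc (-a) a ×ˢ Icc (-a) a) = volume (closedDisc R) := by
    rw [volume_closedDisc hR, Measure.volume_eq_prod, Measure.prod_prod, Real.volume_Icc,
      ← ENNReal.ofReal_mul (by linarith), hR_sq]
    congr 1
    field_simp
    ring
  have h_le := setIntegral_le_setIntegral_of_measure_eq (c := exp (-R ^ 2 / 2))
    (measurableSet_Icc.prod measurableSet_Icc) (measurableSet_closedDisc R) h_volume
    (by rw [h_volume, volume_closedDisc hR]; exact ENNReal.ofReal_ne_top)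
    integrable_exp_neg_normSq_div_two.integrableOn integrable_exp_neg_normSq_div_two.integrableOn
    (fun p hp ↦ by gcongr; exact (not_le.1 hp.2).le)
    (fun p hp ↦ by gcongr; exact hp.1)
  rw [setIntegral_exp_neg_normSq_div_two_square, setIntegral_exp_neg_normSq_div_two_closedDisc hR,
    hR_sq] at h_le
  rw [intervalIntegral.integral_of_le (by linarith), ← integral_Icc_eq_integral_Ioc]
  convert h_le using 4
  ring

lemma Phi_neg (x : ℝ) : Phi (-x) = 1 - Phi x := by
  have h_tail : ∫ t in Iic (-x), exp (-t ^ 2 / 2) = ∫ t in Ioi x, exp (-t ^ 2 / 2) := by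
    rw [← integral_comp_neg_Ioi]
    simp only [even_two, Even.neg_pow]
  have h_total : (∫ t in Iic x, exp (-t ^ 2 / 2)) + ∫ t in Ioi x, exp (-t ^ 2 / 2) = √(2 * π) := by
    rw [intervalIntegral.integral_Iic_add_Ioi integrable_exp_neg_sq_div_two.integrableOn
      integrable_exp_neg_sq_div_two.integrableOn, integral_exp_neg_sq_div_two]
  have h_pos : 0 < √(2 * π) := by positivity
  rw [Phi, Phi, h_tail, eq_sub_iff_add_eq, ← mul_add, add_comm, h_total, inv_mul_cancel₀ h_pos.ne']

lemma Phi_sub_Phi_neg (x : ℝ) :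
    Phi x - Phi (-x) = (√(2 * π))⁻¹ * ∫ t in (-x)..x, exp (-t ^ 2 / 2) := by
  rw [Phi, Phi, ← mul_sub, intervalIntegral.integral_Iic_sub_Iic
    integrable_exp_neg_sq_div_two.integrableOn integrable_exp_neg_sq_div_two.integrableOn]

lemma Phi_mul_one_sub_Phi_ge (γ : ℝ) :
    1 / 4 * exp (-(2 * γ ^ 2) / π) ≤ Phi γ * (1 - Phi γ) := by
  have h_product : Phi γ * (1 - Phi γ) = (1 - (Phi γ - Phi (-γ)) ^ 2) / 4 := by
    rw [Phi_neg]; ring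
  have h_sq_diff : (Phi γ - Phi (-γ)) ^ 2 = (∫ t in (-γ)..γ, exp (-t ^ 2 / 2)) ^ 2 / (2 * π) := by
    rw [Phi_sub_Phi_neg, mul_pow, inv_pow, sq_sqrt (by positivity), inv_mul_eq_div]
  have h_polya : (Phi γ - Phi (-γ)) ^ 2 ≤ 1 - exp (-(2 * γ ^ 2) / π) := by
    rw [h_sq_diff, div_le_iff₀ (by positivity), mul_comm]
    exact sq_intervalIntegral_exp_neg_sq_div_two_le γ
  rw [h_product]
  linarith

/-- For every real `γ`, `[Φ(γ)(1-Φ(γ))]⁻¹ ≤ 4·exp(2γ²/π)`; equivalently,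
`Φ(γ)(1-Φ(γ)) ≥ (1/4)·exp(-2γ²/π)`. -/
theorem stmt0 (γ : ℝ) :
    (Phi γ * (1 - Phi γ))⁻¹ ≤ 4 * Real.exp (2 * γ ^ 2 / Real.pi) ∧
    Phi γ * (1 - Phi γ) ≥ (1 / 4) * Real.exp (-(2 * γ ^ 2) / Real.pi) := by
  have h_lower := Phi_mul_one_sub_Phi_ge γ
  refine ⟨?_, h_lower⟩
  calc (Phi γ * (1 - Phi γ))⁻¹ ≤ (1 / 4 * exp (-(2 * γ ^ 2) / π))⁻¹ :=
        inv_anti₀ (by positivity) h_lower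
    _ = 4 * exp (2 * γ ^ 2 / π) := by
        rw [mul_inv, neg_div, exp_neg, inv_inv, one_div, inv_inv]
end

section
/- Fix an integer k ≥ 1, data a₁,…,a_k ∈ (0,∞) and z₁,…,z_k ∈ {0,1}, and suppose the observations are perfectly separated at some α > 0, i.e. for every i one has z_i = 1 if and only if a_i > α (and a_i ≠ α for all i). Then the likelihood ℓ_k(z|a,(α,β)) converges to 1 as β → 0; in particular it does not converge to zero. -/
open MeasureTheory Real Filter Set

/-- The likelihood of the log-normal (probit) fragility model. -/
noncomputable def lik (k : ℕ) (a : Fin k → ℝ) (z : Fin k → ℕ) (α β : ℝ) : ℝ :=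
  ∏ i, Phi (Real.log (a i / α) / β) ^ (z i) *
    (1 - Phi (Real.log (a i / α) / β)) ^ (1 - z i)

/-!
`Phi` is the cumulative distribution function of `gaussianReal 0 1`, so it tends to `1` at `+∞`
and to `0` at `-∞`. Under perfect separation, `log (aᵢ / α)` is positive exactly when `zᵢ = 1`,
so as `β → 0⁺` the argument `log (aᵢ / α) / β` of `Phi` in the `i`-th factor of the likelihood
tends to `+∞` when `zᵢ = 1` (the factor is `Phi (…)`) and to `-∞` when `zᵢ = 0` (the factor is
`1 - Phi (…)`); every factor therefore tends to `1`.
-/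

open ProbabilityTheory Topology

lemma Phi_eq_cdf_gaussianReal (x : ℝ) : Phi x = cdf (gaussianReal 0 1) x := by
  rw [cdf_eq_real, measureReal_def, gaussianReal_apply_eq_integral _ one_ne_zero,
    ENNReal.toReal_ofReal (setIntegral_nonneg measurableSet_Iic
      fun t _ => gaussianPDFReal_nonneg 0 1 t), Phi, ← integral_const_mul]
  simp [gaussianPDFReal]

lemma tendsto_Phi_atTop : Tendsto Phi atTop (𝓝 1) := by
  simpa only [← funext Phi_eq_cdf_gaussianReal] using tendsto_cdf_atTop (gaussianReal 0 1)

lemma tendsto_Phi_atBot : Tendsto Phi atBot (𝓝 0) := by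
  simpa only [← funext Phi_eq_cdf_gaussianReal] using tendsto_cdf_atBot (gaussianReal 0 1)

lemma tendsto_const_div_nhdsGT_zero_atTop {c : ℝ} (hc : 0 < c) :
    Tendsto (fun β : ℝ => c / β) (𝓝[>] 0) atTop := by
  simpa only [div_eq_mul_inv] using tendsto_inv_nhdsGT_zero.const_mul_atTop hc

lemma tendsto_const_div_nhdsGT_zero_atBot {c : ℝ} (hc : c < 0) :
    Tendsto (fun β : ℝ => c / β) (𝓝[>] 0) atBot := by
  simpa only [div_eq_mul_inv] using tendsto_inv_nhdsGT_zero.const_mul_atTop_of_neg hc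

lemma tendsto_Phi_pow_mul_one_sub_Phi_pow {L : ℝ} {n : ℕ} (h : n = 1 ∧ 0 < L ∨ n = 0 ∧ L < 0) :
    Tendsto (fun β : ℝ => Phi (L / β) ^ n * (1 - Phi (L / β)) ^ (1 - n)) (𝓝[>] 0) (𝓝 1) := by
  rcases h with ⟨rfl, hL⟩ | ⟨rfl, hL⟩
  · simpa [Function.comp_def] using
      tendsto_Phi_atTop.comp (tendsto_const_div_nhdsGT_zero_atTop hL)
  · simpa using (tendsto_Phi_atBot.comp (tendsto_const_div_nhdsGT_zero_atBot hL)).const_sub 1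

theorem stmt6_general (k : ℕ) (a : Fin k → ℝ) (ha : ∀ i, 0 < a i)
    (z : Fin k → ℕ) (hz : ∀ i, z i = 0 ∨ z i = 1) (α : ℝ) (hα : 0 < α)
    (hsep : ∀ i, z i = 1 ↔ α < a i) (hne : ∀ i, a i ≠ α) :
    Filter.Tendsto (fun β : ℝ => lik k a z α β) (nhdsWithin 0 (Set.Ioi 0))
      (nhds 1) := by
  have hsign : ∀ i, z i = 1 ∧ 0 < log (a i / α) ∨ z i = 0 ∧ log (a i / α) < 0 := by
    intro i
    rcases hz i with h0 | h1
    · have hlt : a i < α :=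
        (hne i).lt_of_le (not_lt.1 fun h => absurd ((hsep i).2 h) (by omega))
      exact Or.inr ⟨h0, log_neg (div_pos (ha i) hα) ((div_lt_one hα).2 hlt)⟩
    · exact Or.inl ⟨h1, log_pos ((one_lt_div hα).2 ((hsep i).1 h1))⟩
  simpa only [lik, Finset.prod_const_one] using
    tendsto_finsetProd _ fun i _ => tendsto_Phi_pow_mul_one_sub_Phi_pow (hsign i)

/-- Fix `k ≥ 1`, data `aᵢ ∈ (0,∞)`, `zᵢ ∈ {0,1}`, perfectly separated at some `α > 0`
(i.e. `zᵢ = 1 ↔ aᵢ > α`, and `aᵢ ≠ α` for all `i`). Then `ℓ_k(z|a,(α,β)) → 1` as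
`β → 0⁺`. -/
theorem stmt6 (k : ℕ) (hk : 1 ≤ k) (a : Fin k → ℝ) (ha : ∀ i, 0 < a i)
    (z : Fin k → ℕ) (hz : ∀ i, z i = 0 ∨ z i = 1) (α : ℝ) (hα : 0 < α)
    (hsep : ∀ i, z i = 1 ↔ α < a i) (hne : ∀ i, a i ≠ α) :
    Filter.Tendsto (fun β : ℝ => lik k a z α β) (nhdsWithin 0 (Set.Ioi 0))
      (nhds 1) :=
  stmt6_general k a ha z hz α hα hsep hne
end

section
/- Assume the intensity measure density is log-normal: p(a) = (√(2πσ²)·a)^{-1}·exp(-(log a - μ)²/(2σ²)) on (0,∞), with parameters μ ∈ ℝ, σ > 0. For k = 0,1,2 and θ = (α,β) ∈ (0,∞)², define A_{k1,k2}(α,β) = ∫_0^∞ log^k(a/α)·Φ'(γ(a))²/[Φ(γ(a))(1-Φ(γ(a)))]·p(a) da, where γ(a) = (log a - log α)/β and Φ'(x) = (2π)^{-1/2}exp(-x²/2). Then for each fixed α > 0: (i) for k = 0 and k = 2 there exist constants D_k(α) > 0 such that A_{k1,k2}(α,β) ~ D_k(α)·β^{k+1} as β → 0; (ii) A_{11,12}(α,β)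 = o(β²) as β → 0. -/
open MeasureTheory Real Filter Set

/-- The standard Gaussian density `Φ'(x) = (2π)^{-1/2} exp(-x²/2)`. -/
noncomputable def Phi' (x : ℝ) : ℝ :=
  (Real.sqrt (2 * Real.pi))⁻¹ * Real.exp (-x ^ 2 / 2)

/-- The log-normal intensity measure density
`p(a) = (√(2πσ²)·a)⁻¹ exp(-(log a - μ)²/(2σ²))`. -/
noncomputable def pLN (μ σ a : ℝ) : ℝ :=
  (Real.sqrt (2 * Real.pi * σ ^ 2) * a)⁻¹ * Real.exp (-(Real.log a - μ) ^ 2 / (2 * σ ^ 2))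

/-- `A_{k1,k2}(α,β) = ∫₀^∞ log^k(a/α)·Φ'(γ(a))²/[Φ(γ(a))(1-Φ(γ(a)))]·p(a) da`
with `γ(a) = (log a - log α)/β`. -/
noncomputable def A (μ σ : ℝ) (k : ℕ) (α β : ℝ) : ℝ :=
  ∫ a in Set.Ioi (0 : ℝ),
    Real.log (a / α) ^ k *
      (Phi' ((Real.log a - Real.log α) / β) ^ 2 /
        (Phi ((Real.log a - Real.log α) / β) *
          (1 - Phi ((Real.log a - Real.log α) / β)))) * pLN μ σ a

/-- The Jeffreys prior, `J(θ) = √(|A₀₁,₀₂·A₂₁,₂₂ − A₁₁,₁₂²| / (α²β⁶))`. -/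
noncomputable def Jeff (μ σ α β : ℝ) : ℝ :=
  Real.sqrt (|A μ σ 0 α β * A μ σ 2 α β - A μ σ 1 α β ^ 2| / (α ^ 2 * β ^ 6))

open ProbabilityTheory Topology

/-!
Substituting `a = α exp (β u)` gives `A μ σ k α β = β ^ (k + 1) ∫ u ^ k w(u) N(log α + β u) du`,
where `w = Φ'² / (Φ (1 - Φ))` and `N` is the normal density with mean `μ` and variance `σ²`.
Since `1 - Φ(u) ≥ Φ'(u + 1)` for `u ≥ 0` and `w` is even, `w(u) = O(exp (-u² / 4))`, so by
dominated convergence the integral tends to `(∫ u ^ k w) N(log α)` as `β → 0`. This moment is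
positive for even `k` and vanishes for odd `k`.
-/

lemma continuous_gaussianPDFReal (μ : ℝ) (v : NNReal) : Continuous (gaussianPDFReal μ v) := by
  unfold gaussianPDFReal
  fun_prop

lemma gaussianPDFReal_le (μ : ℝ) (v : NNReal) (x : ℝ) :
    gaussianPDFReal μ v x ≤ (√(2 * π * v))⁻¹ := by
  rw [gaussianPDFReal]
  refine mul_le_of_le_one_right (by positivity) (exp_le_one_iff.2 ?_)
  exact div_nonpos_of_nonpos_of_nonneg (neg_nonpos.2 (sq_nonneg _)) (by positivity)

lemma Phi'_eq_gaussianPDFReal : Phi' = gaussianPDFReal 0 1 := by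
  ext x
  simp [Phi', gaussianPDFReal]

lemma Phi'_pos (x : ℝ) : 0 < Phi' x :=
  Phi'_eq_gaussianPDFReal ▸ gaussianPDFReal_pos 0 1 x one_ne_zero

lemma Phi'_neg (x : ℝ) : Phi' (-x) = Phi' x := by
  simp [Phi']

lemma Phi'_le_Phi'_of_sq_le {x y : ℝ} (h : y ^ 2 ≤ x ^ 2) : Phi' x ≤ Phi' y := by
  unfold Phi'
  gcongr

lemma integrable_Phi' : Integrable Phi' :=
  Phi'_eq_gaussianPDFReal ▸ integrable_gaussianPDFReal 0 1

lemma Phi_eq_integral_Phi' (x : ℝ) : Phi x = ∫ t in Iic x, Phi' t := by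
  rw [Phi, ← integral_const_mul]
  rfl

lemma Phi_pos (x : ℝ) : 0 < Phi x := by
  rw [Phi_eq_integral_Phi', integral_pos_iff_support_of_nonneg (fun t => (Phi'_pos t).le)
    integrable_Phi'.integrableOn, Function.support_eq_univ fun t => (Phi'_pos t).ne']
  simp [Real.volume_Iic]

lemma one_sub_Phi (x : ℝ) : 1 - Phi x = Phi (-x) := by
  have htotal : ∫ t, Phi' t = 1 := by
    rw [Phi'_eq_gaussianPDFReal]
    exact integral_gaussianPDFReal_eq_one 0 one_ne_zero
  rw [Phi_eq_integral_Phi', Phi_eq_integral_Phi', ← htotal,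
    ← intervalIntegral.integral_Iic_add_Ioi integrable_Phi'.integrableOn
      integrable_Phi'.integrableOn, add_sub_cancel_left, ← integral_comp_neg_Ioi]
  simp only [Phi'_neg]

lemma Phi_mono : Monotone Phi := fun x y hxy => by
  rw [Phi_eq_integral_Phi', Phi_eq_integral_Phi']
  exact setIntegral_mono_set integrable_Phi'.integrableOn
    (ae_of_all _ fun t => (Phi'_pos t).le) (Iic_subset_Iic.2 hxy).eventuallyLE

lemma Phi_zero : Phi 0 = 1 / 2 := by
  linarith [neg_zero (G := ℝ) ▸ one_sub_Phi 0]

lemma Phi'_sub_one_le_Phi {x : ℝ} (hx : x ≤ 0) : Phi' (x - 1) ≤ Phi x := by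
  have hvol : volume (Ioc (x - 1) x) = 1 := by simp [Real.volume_Ioc]
  calc Phi' (x - 1) = Phi' (x - 1) * volume.real (Ioc (x - 1) x) := by simp [measureReal_def, hvol]
    _ ≤ ∫ t in Ioc (x - 1) x, Phi' t :=
      setIntegral_ge_of_const_le_real measurableSet_Ioc (by simp [hvol])
        (fun t ht => Phi'_le_Phi'_of_sq_le (by nlinarith [ht.1, ht.2])) integrable_Phi'.integrableOn
    _ ≤ ∫ t in Iic x, Phi' t :=
      setIntegral_mono_set integrable_Phi'.integrableOn (ae_of_all _ fun t => (Phi'_pos t).le)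
        Ioc_subset_Iic_self.eventuallyLE
    _ = Phi x := (Phi_eq_integral_Phi' x).symm

noncomputable def fisherWeight (u : ℝ) : ℝ := Phi' u ^ 2 / (Phi u * (1 - Phi u))

lemma fisherWeight_eq (u : ℝ) : fisherWeight u = Phi' u ^ 2 / (Phi u * Phi (-u)) := by
  rw [fisherWeight, one_sub_Phi]

lemma fisherWeight_pos (u : ℝ) : 0 < fisherWeight u := by
  rw [fisherWeight_eq]
  exact div_pos (pow_pos (Phi'_pos u) 2) (mul_pos (Phi_pos u) (Phi_pos _))

lemma fisherWeight_neg (u : ℝ) : fisherWeight (-u) = fisherWeight u := by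
  simp only [fisherWeight_eq, Phi'_neg, neg_neg, mul_comm]

lemma measurable_fisherWeight : Measurable fisherWeight := by
  have := Phi_mono.measurable
  unfold fisherWeight
  rw [Phi'_eq_gaussianPDFReal]
  fun_prop

lemma Phi'_abs_add_one_div_two_le (u : ℝ) : Phi' (|u| + 1) / 2 ≤ Phi u * Phi (-u) := by
  wlog hu : 0 ≤ u generalizing u
  · simpa only [abs_neg, neg_neg, mul_comm] using this (-u) (by linarith)
  have hhalf : 1 / 2 ≤ Phi u := Phi_zero ▸ Phi_mono hu
  have htail : Phi' (|u| + 1) ≤ Phi (-u) := by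
    have h := Phi'_sub_one_le_Phi (neg_nonpos.2 hu)
    rwa [show -u - 1 = -(|u| + 1) by rw [abs_of_nonneg hu]; ring, Phi'_neg] at h
  nlinarith [Phi'_pos (|u| + 1), Phi_pos (-u)]

lemma fisherWeight_le (u : ℝ) :
    fisherWeight u ≤ 2 * exp (3 / 2) / √(2 * π) * exp (-(1 / 4) * u ^ 2) := by
  have hden : 0 < Phi' (|u| + 1) / 2 := by linarith [Phi'_pos (|u| + 1)]
  calc fisherWeight u ≤ Phi' u ^ 2 / (Phi' (|u| + 1) / 2) := by
        rw [fisherWeight_eq]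
        exact div_le_div_of_nonneg_left (sq_nonneg _) hden (Phi'_abs_add_one_div_two_le u)
    _ = 2 / √(2 * π) * exp (|u| + 1 / 2 - u ^ 2 / 2) := by
        have hexp : exp (-u ^ 2 / 2) ^ 2 =
            exp (|u| + 1 / 2 - u ^ 2 / 2) * exp (-(|u| + 1) ^ 2 / 2) := by
          rw [← exp_nat_mul, ← exp_add]
          congr 1
          ring_nf
          rw [sq_abs]
          ring
        rw [div_eq_iff hden.ne', Phi', Phi', mul_pow, hexp]
        ring
    _ ≤ 2 / √(2 * π) * (exp (3 / 2) * exp (-(1 / 4) * u ^ 2)) := by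
        rw [← exp_add]
        gcongr
        nlinarith [sq_nonneg (|u| / 2 - 1), sq_abs u]
    _ = _ := by ring

lemma integrable_pow_mul_fisherWeight (k : ℕ) :
    Integrable fun u : ℝ => u ^ k * fisherWeight u := by
  have hgauss : Integrable fun u : ℝ => u ^ k * exp (-(1 / 4) * u ^ 2) := by
    simpa [rpow_natCast] using integrable_rpow_mul_exp_neg_mul_sq (by norm_num : (0 : ℝ) < 1 / 4)
      (by linarith [k.cast_nonneg (α := ℝ)] : (-1 : ℝ) < k)
  refine (hgauss.norm.const_mul (2 * exp (3 / 2) / √(2 * π))).mono'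
    ((measurable_id.pow_const k).mul measurable_fisherWeight).aestronglyMeasurable
    (ae_of_all _ fun u => ?_)
  rw [norm_mul, norm_mul, norm_of_nonneg (fisherWeight_pos u).le,
    norm_of_nonneg (exp_pos _).le, mul_left_comm]
  exact mul_le_mul_of_nonneg_left (fisherWeight_le u) (norm_nonneg _)

lemma integral_pow_mul_fisherWeight_pos {k : ℕ} (hk : Even k) :
    0 < ∫ u, u ^ k * fisherWeight u := by
  rw [integral_pos_iff_support_of_nonneg (fun u => mul_nonneg (hk.pow_nonneg u)
    (fisherWeight_pos u).le) (integrable_pow_mul_fisherWeight k)]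
  refine lt_of_lt_of_le (by simp : 0 < volume (Ioi (0 : ℝ))) (measure_mono fun u hu => ?_)
  exact (mul_pos (pow_pos hu k) (fisherWeight_pos u)).ne'

lemma integral_pow_mul_fisherWeight_eq_zero {k : ℕ} (hk : Odd k) :
    ∫ u, u ^ k * fisherWeight u = 0 := by
  have h := integral_neg_eq_self (fun u => u ^ k * fisherWeight u) volume
  simp only [hk.neg_pow, fisherWeight_neg, neg_mul, integral_neg] at h
  linarith

theorem tendsto_integral_mul_comp_add_mul {f φ : ℝ → ℝ} (hf : Integrable f)
    (hφ : Continuous φ) {M : ℝ} (hM : ∀ x, ‖φ x‖ ≤ M) (c : ℝ) :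
    Tendsto (fun β => ∫ u, f u * φ (c + β * u)) (𝓝 0) (𝓝 ((∫ u, f u) * φ c)) := by
  rw [← integral_mul_const]
  refine tendsto_integral_filter_of_dominated_convergence (fun u => ‖f u‖ * M)
    (Eventually.of_forall fun β => hf.aestronglyMeasurable.mul (by fun_prop : Continuous
      fun u => φ (c + β * u)).aestronglyMeasurable)
    (Eventually.of_forall fun β => ae_of_all _ fun u => ?_) (hf.norm.mul_const M)
    (ae_of_all _ fun u => ?_)
  · rw [norm_mul]
    exact mul_le_mul_of_nonneg_left (hM _) (norm_nonneg _)
  · have : Continuous fun β => f u * φ (c + β * u) := by fun_prop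
    simpa using this.tendsto 0

theorem integral_exp_smul_comp_exp {E : Type*} [NormedAddCommGroup E] [NormedSpace ℝ E]
    (g : ℝ → E) : ∫ x, exp x • g (exp x) = ∫ y in Ioi 0, g y := by
  rw [← range_exp, ← image_univ, integral_image_eq_integral_abs_deriv_smul MeasurableSet.univ
    (fun x _ => (hasDerivAt_exp x).hasDerivWithinAt) exp_injective.injOn, setIntegral_univ]
  simp only [abs_of_pos (exp_pos _)]

lemma exp_mul_pLN (μ σ x : ℝ) :
    exp x * pLN μ σ (exp x) = gaussianPDFReal μ (σ ^ 2).toNNReal x := by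
  rw [pLN, gaussianPDFReal, Real.coe_toNNReal _ (sq_nonneg σ), log_exp]
  field_simp

theorem A_eq_pow_mul_integral (μ σ : ℝ) (k : ℕ) {α β : ℝ} (hα : 0 < α) (hβ : 0 < β) :
    A μ σ k α β = β ^ (k + 1) *
      ∫ u, u ^ k * fisherWeight u * gaussianPDFReal μ (σ ^ 2).toNNReal (log α + β * u) := by
  set F : ℝ → ℝ := fun u =>
    u ^ k * fisherWeight u * gaussianPDFReal μ (σ ^ 2).toNNReal (log α + β * u)
  have hexp : A μ σ k α β = ∫ x, β ^ k * F ((x - log α) / β) := by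
    rw [A, ← integral_exp_smul_comp_exp]
    refine integral_congr_ae (ae_of_all _ fun x => ?_)
    have hx : log α + β * ((x - log α) / β) = x := by field_simp; ring
    simp only [F, smul_eq_mul]
    rw [log_div (exp_ne_zero x) hα.ne', log_exp, hx, div_pow, ← exp_mul_pLN,
      ← fisherWeight]
    field_simp
  rw [hexp, integral_const_mul, integral_sub_right_eq_self (fun x => F (x / β)) (log α),
    Measure.integral_comp_div, abs_of_pos hβ, smul_eq_mul]
  ring

theorem tendsto_A_div_pow (μ σ : ℝ) (k : ℕ) {α : ℝ} (hα : 0 < α) :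
    Tendsto (fun β => A μ σ k α β / β ^ (k + 1)) (𝓝[>] 0)
      (𝓝 ((∫ u, u ^ k * fisherWeight u) * gaussianPDFReal μ (σ ^ 2).toNNReal (log α))) := by
  have hbound (x : ℝ) :
      ‖gaussianPDFReal μ (σ ^ 2).toNNReal x‖ ≤ (√(2 * π * (σ ^ 2).toNNReal))⁻¹ :=
    (norm_of_nonneg (gaussianPDFReal_nonneg _ _ x)).trans_le (gaussianPDFReal_le _ _ x)
  have hlim := tendsto_integral_mul_comp_add_mul (integrable_pow_mul_fisherWeight k)
    (continuous_gaussianPDFReal μ _) hbound (log α)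
  refine (hlim.mono_left nhdsWithin_le_nhds).congr' ?_
  filter_upwards [self_mem_nhdsWithin] with β hβ
  rw [A_eq_pow_mul_integral μ σ k hα hβ, mul_div_cancel_left₀ _ (pow_ne_zero _ hβ.ne')]

/-- For the log-normal IM density, for each fixed `α > 0`: for `k = 0, 2` there are
`D_k(α) > 0` with `A_{k1,k2}(α,β) ~ D_k(α)·β^{k+1}` as `β → 0⁺`, and
`A_{11,12}(α,β) = o(β²)` as `β → 0⁺`. -/
theorem stmt8 (μ σ : ℝ) (hσ : 0 < σ) (α : ℝ) (hα : 0 < α) :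
    (∃ D0 > (0 : ℝ), Filter.Tendsto (fun β : ℝ => A μ σ 0 α β / (D0 * β ^ (0 + 1)))
        (nhdsWithin 0 (Set.Ioi 0)) (nhds 1)) ∧
    (∃ D2 > (0 : ℝ), Filter.Tendsto (fun β : ℝ => A μ σ 2 α β / (D2 * β ^ (2 + 1)))
        (nhdsWithin 0 (Set.Ioi 0)) (nhds 1)) ∧
    Filter.Tendsto (fun β : ℝ => A μ σ 1 α β / β ^ 2)
      (nhdsWithin 0 (Set.Ioi 0)) (nhds 0) := by
  have hdensity : 0 < gaussianPDFReal μ (σ ^ 2).toNNReal (log α) :=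
    gaussianPDFReal_pos _ _ _ (Real.toNNReal_pos.2 (by positivity)).ne'
  have hmoment : ∀ k, Even k → ∃ D > (0 : ℝ),
      Tendsto (fun β => A μ σ k α β / (D * β ^ (k + 1))) (𝓝[>] 0) (𝓝 1) := by
    intro k hk
    set D := (∫ u, u ^ k * fisherWeight u) * gaussianPDFReal μ (σ ^ 2).toNNReal (log α)
    have hD : 0 < D := mul_pos (integral_pow_mul_fisherWeight_pos hk) hdensity
    have h := (tendsto_A_div_pow μ σ k hα).div_const D
    rw [div_self hD.ne'] at h
    exact ⟨D, hD, by simpa only [div_mul_eq_div_div_swap] using h⟩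
  refine ⟨hmoment 0 Even.zero, hmoment 2 even_two, ?_⟩
  have h := tendsto_A_div_pow μ σ 1 hα
  rwa [integral_pow_mul_fisherWeight_eq_zero odd_one, zero_mul] at h
end
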